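/- Let x ∈ ℝ^n with |x| = 1, let m ≥ 0, let λ ∈ ℝ with λ² ≤ m², and let f : ℝ → ℂ^N be continuously differentiable on [−1, 1], satisfy the boundary conditions −i α_{n+1} Γ(x) f(1) = f(1) and −i α_{n+1} Γ(x) f(−1) = −f(−1), and satisfy the equation −i Γ(x) f'(t) + m α_{n+1} f(t) = λ f(t) for all t ∈ [−1, 1]. Then f(t) = 0 for all t ∈ [−1, 1]. -/

import Mathlib

/-!
Write `a = α_{n+1}`, `Γ = Γ(x)` and `B = -i a Γ`. The Clifford relations make `a` and `Γ`
Hermitian involutions that anticommute, so `B` is Hermitian, and along a solution the equation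
gives `d/dt ⟨f, B f⟩ = 2 Re ⟨f, (λ a - m) f⟩ ≤ 0`, since `|⟨u, a u⟩| ≤ ⟨u, u⟩` and `|λ| ≤ m`.
The boundary conditions say that `⟨f, B f⟩` equals `|f(1)|²` at `1` and `-|f(-1)|²` at `-1`, so
this monotonicity forces `f(-1) = 0`. As `Γ² = 1`, the equation is the linear ODE
`f' = i Γ (λ - m a) f`, and Grönwall's inequality shows that its solution vanishing at `-1` is zero.
-/

open Matrix Set
open scoped ComplexOrder

section Clifford

variable {K A ι : Type*} [Field K] [Ring A] [Algebra K A]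

theorem clifford_mul_self [CharZero K] [DecidableEq ι] {e : ι → A}
    (he : ∀ j k, e j * e k + e k * e j = (if j = k then (2 : K) else 0) • 1) (j : ι) :
    e j * e j = 1 :=
  smul_right_injective A (two_ne_zero (α := K)) <| by
    simpa only [two_smul, if_pos] using he j j

theorem clifford_sum_mul_self [CharZero K] [Fintype ι] [DecidableEq ι] {e : ι → A}
    (he : ∀ j k, e j * e k + e k * e j = (if j = k then (2 : K) else 0) • 1) (c : ι → K) :
    (∑ j, c j • e j) * (∑ j, c j • e j) = (∑ j, c j ^ 2) • 1 := by
  have hexp : (∑ j, c j • e j) * (∑ j, c j • e j) = ∑ j, ∑ k, (c j * c k) • (e j * e k) := by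
    simp only [Finset.sum_mul_sum, smul_mul_smul_comm]
  refine smul_right_injective A (two_ne_zero (α := K)) ?_
  calc (2 : K) • ((∑ j, c j • e j) * (∑ j, c j • e j))
      = ∑ j, ∑ k, (c j * c k) • (e j * e k + e k * e j) := by
        rw [two_smul, hexp]
        simp only [smul_add, Finset.sum_add_distrib]
        congr 1
        rw [Finset.sum_comm]
        exact Finset.sum_congr rfl fun j _ => Finset.sum_congr rfl fun k _ => by rw [mul_comm]
    _ = (2 : K) • (∑ j, c j ^ 2) • 1 := by
        simp only [he, ite_smul, zero_smul, smul_ite, smul_zero, Finset.sum_ite_eq,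
          Finset.mem_univ, if_true, smul_smul, ← Finset.sum_smul, Finset.mul_sum]
        simp only [sq, mul_comm (2 : K)]

theorem mul_sum_smul_add_sum_smul_mul_eq_zero [Fintype ι] {a : A} {e : ι → A} (c : ι → K)
    (h : ∀ j, a * e j + e j * a = 0) :
    a * (∑ j, c j • e j) + (∑ j, c j • e j) * a = 0 := by
  simp only [Finset.mul_sum, Finset.sum_mul, ← Finset.sum_add_distrib, mul_smul_comm,
    smul_mul_assoc, ← smul_add, h, smul_zero, Finset.sum_const_zero]

end Clifford

section QuadraticForm

variable {n : Type*} [Fintype n]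

theorem star_mulVec_dotProduct_of_isHermitian {a : Matrix n n ℂ} (ha : a.IsHermitian)
    (u v : n → ℂ) : star (a *ᵥ u) ⬝ᵥ v = star u ⬝ᵥ (a *ᵥ v) := by
  rw [star_mulVec, ha.eq, dotProduct_mulVec]

theorem re_star_dotProduct_mulVec_comm {a : Matrix n n ℂ} (ha : a.IsHermitian) (u v : n → ℂ) :
    (star v ⬝ᵥ (a *ᵥ u)).re = (star u ⬝ᵥ (a *ᵥ v)).re := by
  rw [star_dotProduct, star_mulVec_dotProduct_of_isHermitian ha, Complex.star_def,
    Complex.conj_re]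

theorem re_star_dotProduct_self_nonneg (u : n → ℂ) : 0 ≤ (star u ⬝ᵥ u).re :=
  (Complex.nonneg_iff.1 (dotProduct_star_self_nonneg u)).1

theorem eq_zero_of_re_star_dotProduct_self_nonpos {u : n → ℂ} (h : (star u ⬝ᵥ u).re ≤ 0) :
    u = 0 := by
  refine dotProduct_star_self_eq_zero.1 (Complex.ext ?_ ?_)
  · exact le_antisymm h (re_star_dotProduct_self_nonneg u)
  · exact (Complex.nonneg_iff.1 (dotProduct_star_self_nonneg u)).2.symm

theorem abs_re_star_dotProduct_mulVec_le [DecidableEq n] {a : Matrix n n ℂ} (ha : a.IsHermitian)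
    (ha2 : a * a = 1) (u : n → ℂ) : |(star u ⬝ᵥ (a *ᵥ u)).re| ≤ (star u ⬝ᵥ u).re := by
  have hsq : ∀ s : ℝ, s ^ 2 = 1 → star (u + (s : ℂ) • a *ᵥ u) ⬝ᵥ (u + (s : ℂ) • a *ᵥ u)
      = 2 * (star u ⬝ᵥ u) + 2 * s * (star u ⬝ᵥ (a *ᵥ u)) := by
    intro s hs
    simp only [star_add, star_smul, add_dotProduct, dotProduct_add, smul_dotProduct,
      dotProduct_smul, star_mulVec_dotProduct_of_isHermitian ha, mulVec_mulVec, ha2, one_mulVec,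
      Complex.star_def, Complex.conj_ofReal, smul_eq_mul]
    have hs' : (s : ℂ) ^ 2 = 1 := by exact_mod_cast hs
    linear_combination (star u ⬝ᵥ u) * hs'
  have hplus := re_star_dotProduct_self_nonneg (u + ((1 : ℝ) : ℂ) • a *ᵥ u)
  have hminus := re_star_dotProduct_self_nonneg (u + ((-1 : ℝ) : ℂ) • a *ᵥ u)
  rw [hsq 1 (by norm_num)] at hplus
  rw [hsq (-1) (by norm_num)] at hminus
  norm_num at hplus hminus
  exact abs_le.2 ⟨by linarith, by linarith⟩

end QuadraticForm

section Derivatives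

variable {𝕜 𝔸 : Type*} [NontriviallyNormedField 𝕜] [NormedCommRing 𝔸] [NormedAlgebra 𝕜 𝔸]
  {m n : Type*} [Fintype n] {u w : 𝕜 → n → 𝔸} {u' w' : n → 𝔸} {s : Set 𝕜} {t : 𝕜}

theorem HasDerivWithinAt.dotProduct (hu : HasDerivWithinAt u u' s t)
    (hw : HasDerivWithinAt w w' s t) :
    HasDerivWithinAt (fun t => u t ⬝ᵥ w t) (u' ⬝ᵥ w t + u t ⬝ᵥ w') s t := by
  unfold _root_.dotProduct
  rw [← Finset.sum_add_distrib]
  exact HasDerivWithinAt.fun_sum fun i _ =>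
    (hasDerivWithinAt_pi.1 hu i).mul (hasDerivWithinAt_pi.1 hw i)

theorem HasDerivWithinAt.mulVec (M : Matrix m n 𝔸) (hu : HasDerivWithinAt u u' s t) :
    HasDerivWithinAt (fun t => M *ᵥ u t) (M *ᵥ u') s t :=
  hasDerivWithinAt_pi.2 fun i => by
    unfold Matrix.mulVec _root_.dotProduct
    exact HasDerivWithinAt.fun_sum fun j _ => (hasDerivWithinAt_pi.1 hu j).const_mul (M i j)

end Derivatives

theorem antitoneOn_re_star_dotProduct_mulVec {n : Type*} [Fintype n] {B : Matrix n n ℂ}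
    (hB : B.IsHermitian) {f f' : ℝ → n → ℂ} {a b : ℝ}
    (hf : ∀ t ∈ Icc a b, HasDerivWithinAt f (f' t) (Icc a b) t)
    (hneg : ∀ t ∈ Icc a b, (star (f t) ⬝ᵥ (B *ᵥ f' t)).re ≤ 0) :
    AntitoneOn (fun t => (star (f t) ⬝ᵥ (B *ᵥ f t)).re) (Icc a b) := by
  have hderiv : ∀ t ∈ Icc a b, HasDerivWithinAt (fun t => (star (f t) ⬝ᵥ (B *ᵥ f t)).re)
      (2 * (star (f t) ⬝ᵥ (B *ᵥ f' t)).re) (Icc a b) t := by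
    intro t ht
    have h := ((hf t ht).star.dotProduct ((hf t ht).mulVec B))
    have hre := Complex.reCLM.hasFDerivAt.comp_hasDerivWithinAt t h
    rwa [Complex.reCLM_apply, Complex.add_re, re_star_dotProduct_mulVec_comm hB (f t),
      ← two_mul] at hre
  refine antitoneOn_of_hasDerivWithinAt_nonpos (convex_Icc a b)
    (f' := fun t => 2 * (star (f t) ⬝ᵥ (B *ᵥ f' t)).re)
    (fun t ht => (hderiv t ht).continuousWithinAt) (fun t ht => ?_) (fun t ht => ?_)
  · exact (hderiv t (interior_subset ht)).mono interior_subset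
  · linarith [hneg t (interior_subset ht)]

theorem eq_zero_of_hasDerivWithinAt_mulVec {𝕜 n : Type*} [RCLike 𝕜] [Fintype n]
    {M : Matrix n n 𝕜} {f : ℝ → n → 𝕜} {a b : ℝ}
    (hf : ∀ t ∈ Icc a b, HasDerivWithinAt f (M *ᵥ f t) (Icc a b) t) (ha : f a = 0) :
    ∀ t ∈ Icc a b, f t = 0 := by
  let _ := Matrix.linftyOpNormedAddCommGroup (m := n) (n := n) (α := 𝕜)
  refine eq_zero_of_abs_deriv_le_mul_abs_self_of_eq_zero_right
    (fun t ht => (hf t ht).continuousWithinAt) (fun t ht => ?_) ha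
    (fun t _ => linfty_opNorm_mulVec M (f t))
  exact (hf t (Ico_subset_Icc_self ht)).mono_of_mem_nhdsWithin
    (Icc_mem_nhdsGE_of_mem ⟨ht.1, ht.2⟩)

section DiracEquation

variable {n : Type*} [Fintype n] {a G : Matrix n n ℂ} {m lam : ℝ} {u v : n → ℂ}

theorem isHermitian_neg_I_smul_mul (ha : a.IsHermitian) (hG : G.IsHermitian)
    (haG : a * G + G * a = 0) : ((-Complex.I) • (a * G)).IsHermitian := by
  rw [IsHermitian, conjTranspose_smul, conjTranspose_mul, ha.eq, hG.eq,
    eq_neg_of_add_eq_zero_right haG]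
  simp

theorem star_dotProduct_mulVec_eq_of_dirac [DecidableEq n] (ha2 : a * a = 1)
    (h : (-Complex.I) • (G *ᵥ v) + (m : ℂ) • (a *ᵥ u) = (lam : ℂ) • u) :
    star u ⬝ᵥ (((-Complex.I) • (a * G)) *ᵥ v)
      = lam * (star u ⬝ᵥ (a *ᵥ u)) - m * (star u ⬝ᵥ u) := by
  rw [smul_mulVec, ← mulVec_mulVec, ← mulVec_smul, eq_sub_of_add_eq h, mulVec_sub, mulVec_smul,
    mulVec_smul, mulVec_mulVec, ha2, one_mulVec, dotProduct_sub, dotProduct_smul,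
    dotProduct_smul, smul_eq_mul, smul_eq_mul]

theorem re_star_dotProduct_mulVec_nonpos_of_dirac [DecidableEq n] (ha : a.IsHermitian)
    (ha2 : a * a = 1) (hlam : |lam| ≤ m)
    (h : (-Complex.I) • (G *ᵥ v) + (m : ℂ) • (a *ᵥ u) = (lam : ℂ) • u) :
    (star u ⬝ᵥ (((-Complex.I) • (a * G)) *ᵥ v)).re ≤ 0 := by
  rw [star_dotProduct_mulVec_eq_of_dirac ha2 h, Complex.sub_re, Complex.re_ofReal_mul,
    Complex.re_ofReal_mul, sub_nonpos]
  calc lam * (star u ⬝ᵥ (a *ᵥ u)).re ≤ |lam| * |(star u ⬝ᵥ (a *ᵥ u)).re| := by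
        rw [← abs_mul]; exact le_abs_self _
    _ ≤ m * (star u ⬝ᵥ u).re := mul_le_mul hlam (abs_re_star_dotProduct_mulVec_le ha ha2 u)
        (abs_nonneg _) ((abs_nonneg _).trans hlam)

theorem eq_mulVec_of_dirac [DecidableEq n] (hG2 : G * G = 1)
    (h : (-Complex.I) • (G *ᵥ v) + (m : ℂ) • (a *ᵥ u) = (lam : ℂ) • u) :
    v = (Complex.I • (G * ((lam : ℂ) • 1 - (m : ℂ) • a))) *ᵥ u := by
  calc v = Complex.I • G *ᵥ ((-Complex.I) • (G *ᵥ v)) := by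
        rw [mulVec_smul, mulVec_mulVec, hG2, one_mulVec, smul_smul]; simp
    _ = _ := by
        rw [eq_sub_of_add_eq h, smul_mulVec, ← mulVec_mulVec, sub_mulVec, smul_mulVec,
          smul_mulVec, one_mulVec]

end DiracEquation

theorem transverse_dirac_no_small_eigenvalues_general (n N : ℕ)
    (α : Fin (n + 1) → Matrix (Fin N) (Fin N) ℂ)
    (hHerm : ∀ j, (α j).IsHermitian)
    (hAnti : ∀ j k, α j * α k + α k * α j = (if j = k then (2 : ℂ) else 0) • 1)
    (x : Fin n → ℝ) (hx : ∑ j, x j ^ 2 = 1)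
    (m : ℝ) (hm : 0 ≤ m)
    (lam : ℝ) (hlam : lam ^ 2 ≤ m ^ 2)
    (f f' : ℝ → Fin N → ℂ)
    (hf : ∀ t ∈ Set.Icc (-1 : ℝ) 1, HasDerivWithinAt f (f' t) (Set.Icc (-1 : ℝ) 1) t)
    (hbc1 : ((-Complex.I) • (α (Fin.last n) *
        ∑ j : Fin n, (x j : ℂ) • α j.castSucc)).mulVec (f 1) = f 1)
    (hbc2 : ((-Complex.I) • (α (Fin.last n) *
        ∑ j : Fin n, (x j : ℂ) • α j.castSucc)).mulVec (f (-1)) = -f (-1))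
    (heq : ∀ t ∈ Set.Icc (-1 : ℝ) 1,
      (-Complex.I) • (∑ j : Fin n, (x j : ℂ) • α j.castSucc).mulVec (f' t)
        + (m : ℂ) • (α (Fin.last n)).mulVec (f t) = (lam : ℂ) • f t) :
    ∀ t ∈ Set.Icc (-1 : ℝ) 1, f t = 0 := by
  set a := α (Fin.last n)
  set Γ := ∑ j : Fin n, (x j : ℂ) • α j.castSucc
  have ha2 : a * a = 1 := clifford_mul_self hAnti _
  have hΓ2 : Γ * Γ = 1 := by
    have hsq := clifford_sum_mul_self (e := fun j : Fin n => α j.castSucc)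
      (fun j k => by simpa only [Fin.castSucc_inj] using hAnti j.castSucc k.castSucc)
      (fun j => (x j : ℂ))
    have hx' : ∑ j, (x j : ℂ) ^ 2 = 1 := by exact_mod_cast hx
    rwa [hx', one_smul] at hsq
  have hΓ : Γ.IsHermitian :=
    isSelfAdjoint_sum _ fun j _ => (hHerm _).smul (Complex.conj_ofReal (x j))
  have haΓ : a * Γ + Γ * a = 0 := mul_sum_smul_add_sum_smul_mul_eq_zero _ fun j => by
    simpa [(Fin.castSucc_lt_last j).ne'] using hAnti (Fin.last n) j.castSucc
  have hanti := antitoneOn_re_star_dotProduct_mulVec (isHermitian_neg_I_smul_mul (hHerm _) hΓ haΓ)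
    hf fun t ht => re_star_dotProduct_mulVec_nonpos_of_dirac (hHerm _) ha2
      (abs_le_of_sq_le_sq hlam hm) (heq t ht)
  have hf_left : f (-1) = 0 := by
    have hle : (star (f 1) ⬝ᵥ ((-Complex.I • (a * Γ)) *ᵥ f 1)).re
        ≤ (star (f (-1)) ⬝ᵥ ((-Complex.I • (a * Γ)) *ᵥ f (-1))).re :=
      hanti (left_mem_Icc.2 (by norm_num)) (right_mem_Icc.2 (by norm_num)) (by norm_num)
    rw [hbc1, hbc2, dotProduct_neg, Complex.neg_re] at hle
    exact eq_zero_of_re_star_dotProduct_self_nonpos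
      (by linarith [re_star_dotProduct_self_nonneg (f 1)])
  exact eq_zero_of_hasDerivWithinAt_mulVec
    (fun t ht => eq_mulVec_of_dirac hΓ2 (heq t ht) ▸ hf t ht) hf_left

/-- The transverse Dirac operator with infinite mass boundary conditions has no spectrum
in `[−m, m]`: if `λ² ≤ m²` and `f` is a `C¹` solution of
`−i Γ(x) f' + m α_{n+1} f = λ f` on `[−1,1]` satisfying the boundary conditions,
then `f ≡ 0` on `[−1,1]`. -/
theorem transverse_dirac_no_small_eigenvalues (n N : ℕ)
    (α : Fin (n + 1) → Matrix (Fin N) (Fin N) ℂ)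
    (hHerm : ∀ j, (α j).IsHermitian)
    (hAnti : ∀ j k, α j * α k + α k * α j = (if j = k then (2 : ℂ) else 0) • 1)
    (x : Fin n → ℝ) (hx : ∑ j, x j ^ 2 = 1)
    (m : ℝ) (hm : 0 ≤ m)
    (lam : ℝ) (hlam : lam ^ 2 ≤ m ^ 2)
    (f f' : ℝ → Fin N → ℂ)
    (hf : ∀ t ∈ Set.Icc (-1 : ℝ) 1, HasDerivWithinAt f (f' t) (Set.Icc (-1 : ℝ) 1) t)
    (hf' : ContinuousOn f' (Set.Icc (-1 : ℝ) 1))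
    (hbc1 : ((-Complex.I) • (α (Fin.last n) *
        ∑ j : Fin n, (x j : ℂ) • α j.castSucc)).mulVec (f 1) = f 1)
    (hbc2 : ((-Complex.I) • (α (Fin.last n) *
        ∑ j : Fin n, (x j : ℂ) • α j.castSucc)).mulVec (f (-1)) = -f (-1))
    (heq : ∀ t ∈ Set.Icc (-1 : ℝ) 1,
      (-Complex.I) • (∑ j : Fin n, (x j : ℂ) • α j.castSucc).mulVec (f' t)
        + (m : ℂ) • (α (Fin.last n)).mulVec (f t) = (lam : ℂ) • f t) :
    ∀ t ∈ Set.Icc (-1 : ℝ) 1, f t = 0 :=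
  transverse_dirac_no_small_eigenvalues_general n N α hHerm hAnti x hx m hm lam hlam f f' hf hbc1
    hbc2 heq
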